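/- Let R = ℤ[s, s⁻¹, t, t⁻¹] and consider the free R-module with basis {u, v, w}. The quotient of R·u ⊕ R·v ⊕ R·w by the submodule generated by (1−t)u + v + (1−s)w, (1−t)u + v, v + (1−s)w, (1−s+s²)u, (1+st)v, and (1−t+t²)w is isomorphic to R/(R(1−s+s²)+R(1−t)) ⊕ R/(R(1−s)+R(1−t+t²)); in particular its underlying additive group is free abelian of rank 4. -/

import Mathlib

/-!
Row operations on the six generators show that the submodule is `I₁ u ⊕ R v ⊕ I₂ w`, where
`I₁ = (Φ₆(s), 1 - t)` and `I₂ = (1 - s, Φ₆(t))` with `Φ₆(x) = 1 - x + x²`; so the quotient is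
`R/I₁ × R/I₂`. Setting `t = 1` and imposing `Φ₆(s) = 0` leaves `ℤ[X]/(Φ₆)`, because the root of
`Φ₆` is already a unit (a sixth root of unity); swapping `s` and `t` handles `R/I₂`. Each factor
is therefore free of rank `φ(6) = 2` over `ℤ`.
-/

/-- `R = ℤ[s,s⁻¹,t,t⁻¹]`, the group ring of the free abelian group with basis `{s, t}`. -/
noncomputable abbrev GroupRingZ2 : Type := AddMonoidAlgebra ℤ (ℤ × ℤ)

noncomputable def sGen : GroupRingZ2 := AddMonoidAlgebra.single (1, 0) 1

noncomputable def tGen : GroupRingZ2 := AddMonoidAlgebra.single (0, 1) 1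

noncomputable def uV : Fin 3 → GroupRingZ2 := Pi.single 0 1
noncomputable def vV : Fin 3 → GroupRingZ2 := Pi.single 1 1
noncomputable def wV : Fin 3 → GroupRingZ2 := Pi.single 2 1

/-- The submodule of `R³` generated by the six rows of the second differential for the
Artin group of type `F₄`. -/
noncomputable def imF4 : Submodule GroupRingZ2 (Fin 3 → GroupRingZ2) :=
  Submodule.span GroupRingZ2
    {(1 - tGen) • uV + vV + (1 - sGen) • wV, (1 - tGen) • uV + vV, vV + (1 - sGen) • wV,
      (1 - sGen + sGen ^ 2) • uV, (1 + sGen * tGen) • vV, (1 - tGen + tGen ^ 2) • wV}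
open AddMonoidAlgebra Polynomial

theorem MonoidHom.ext_multiplicative_int_prod {M : Type*} [CommMonoid M]
    {f g : Multiplicative (ℤ × ℤ) →* M} (h₁ : f (.ofAdd (1, 0)) = g (.ofAdd (1, 0)))
    (h₂ : f (.ofAdd (0, 1)) = g (.ofAdd (0, 1))) : f = g := by
  -- into the units, the two homs become `ℤ`-linear maps out of `ℤ × ℤ`
  suffices f.toHomUnits = g.toHomUnits from MonoidHom.ext fun x => congr(($this x : M))
  exact MonoidHom.toAdditiveRight.injective <| AddMonoidHom.toIntLinearMap_injective <|
    LinearMap.prod_ext (LinearMap.ext_ring (Units.ext h₁)) (LinearMap.ext_ring (Units.ext h₂))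

theorem AdjoinRoot.isUnit_root_cyclotomic {R : Type*} [CommRing R] {n : ℕ} (hn : n ≠ 0) :
    IsUnit (root (cyclotomic n R)) := by
  refine IsUnit.of_pow_eq_one (n := n) ?_ hn
  simpa [sub_eq_zero] using AdjoinRoot.mk_eq_zero.mpr (cyclotomic.dvd_X_pow_sub_one n R)

theorem AdjoinRoot.rank_eq_natDegree {R : Type*} [CommRing R] [Nontrivial R] {f : R[X]}
    (hf : f.Monic) : Module.rank R (AdjoinRoot f) = f.natDegree := by
  simp [rank_eq_card_basis (powerBasis' hf).basis]

theorem Polynomial.aeval_cyclotomic_six {R A : Type*} [CommRing R] [CommRing A] [Algebra R A]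
    (x : A) : aeval x (cyclotomic 6 R) = 1 - x + x ^ 2 := by
  rw [cyclotomic_six]
  simp only [map_add, map_sub, map_pow, aeval_X, map_one]
  ring

namespace GroupRingZ2

variable {A : Type*} [CommRing A]

theorem ringHom_ext {φ ψ : GroupRingZ2 →+* A} (hs : φ sGen = ψ sGen) (ht : φ tGen = ψ tGen) :
    φ = ψ :=
  RingHom.toIntAlgHom_injective <| AddMonoidAlgebra.algHom_ext'
    (MonoidHom.ext_multiplicative_int_prod hs ht) (Subsingleton.elim _ _)

noncomputable def evalUnits (u v : Aˣ) : GroupRingZ2 →+* A :=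
  AddMonoidAlgebra.lift ℤ A (ℤ × ℤ) <| (Units.coeHom A).comp <|
    (zpowersHom Aˣ u).comp (AddMonoidHom.fst ℤ ℤ).toMultiplicative *
      (zpowersHom Aˣ v).comp (AddMonoidHom.snd ℤ ℤ).toMultiplicative

@[simp]
theorem evalUnits_sGen (u v : Aˣ) : evalUnits u v sGen = u := by
  simp [evalUnits, sGen]

@[simp]
theorem evalUnits_tGen (u v : Aˣ) : evalUnits u v tGen = v := by
  simp [evalUnits, tGen]

noncomputable def swap : GroupRingZ2 ≃ₐ[ℤ] GroupRingZ2 :=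
  AddMonoidAlgebra.domCongr ℤ ℤ AddEquiv.prodComm

@[simp]
theorem swap_sGen : swap sGen = tGen := by
  simp [swap, sGen, tGen]

@[simp]
theorem swap_tGen : swap tGen = sGen := by
  simp [swap, sGen, tGen]

noncomputable def quotientEquivAdjoinRoot (f : ℤ[X]) (hf : IsUnit (AdjoinRoot.root f)) :
    (GroupRingZ2 ⧸ Ideal.span {aeval sGen f, 1 - tGen}) ≃+* AdjoinRoot f := by
  set I := Ideal.span {aeval sGen f, 1 - tGen}
  have hfs : aeval sGen f ∈ I := Ideal.subset_span (by simp)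
  have ht : 1 - tGen ∈ I := Ideal.subset_span (by simp)
  have hker : ∀ a ∈ I, evalUnits hf.unit 1 a = 0 := by
    refine fun a ha ↦ (Ideal.span_le (I := RingHom.ker (evalUnits hf.unit 1)).mpr ?_ ha)
    simp only [Set.pair_subset_iff, SetLike.mem_coe, RingHom.mem_ker]
    refine ⟨?_, by simp⟩
    rw [aeval_def, hom_eval₂, evalUnits_sGen, IsUnit.unit_spec,
      RingHom.ext_int ((evalUnits hf.unit 1).comp _) (AdjoinRoot.of f), AdjoinRoot.eval₂_root]
  have hroot : eval₂ (Int.castRingHom _) (Ideal.Quotient.mk I sGen) f = 0 := by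
    rw [← Ideal.Quotient.eq_zero_iff_mem.mpr hfs, aeval_def, hom_eval₂,
      RingHom.ext_int ((Ideal.Quotient.mk I).comp _) (Int.castRingHom _)]
  refine RingEquiv.ofRingHom (Ideal.Quotient.lift I (evalUnits hf.unit 1) hker)
    (AdjoinRoot.lift (Int.castRingHom _) (Ideal.Quotient.mk I sGen) hroot)
    (AdjoinRoot.ringHom_ext (RingHom.ext_int _ _) ?_)
    (Ideal.Quotient.ringHom_ext (ringHom_ext ?_ ?_))
  · simp
  · simp
  · simpa using Ideal.Quotient.eq.mpr ht

noncomputable def quotientEquivAdjoinRootSwap (f : ℤ[X]) (hf : IsUnit (AdjoinRoot.root f)) :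
    (GroupRingZ2 ⧸ Ideal.span {1 - sGen, aeval tGen f}) ≃+* AdjoinRoot f :=
  (Ideal.quotientEquiv _ _ swap.toRingEquiv
      (by simp [Ideal.map_span, Set.image_pair, ← aeval_algHom_apply, Set.pair_comm])).trans
    (quotientEquivAdjoinRoot f hf)

end GroupRingZ2

section

variable {R : Type*} [CommRing R]

noncomputable def coord₀₂Mod (I J : Ideal R) : (Fin 3 → R) →ₗ[R] (R ⧸ I) × (R ⧸ J) :=
  (I.mkQ ∘ₗ LinearMap.proj 0).prod (J.mkQ ∘ₗ LinearMap.proj 2)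

theorem coord₀₂Mod_surjective (I J : Ideal R) : Function.Surjective (coord₀₂Mod I J) := by
  rintro ⟨a, b⟩
  obtain ⟨a, rfl⟩ := I.mkQ_surjective a
  obtain ⟨b, rfl⟩ := J.mkQ_surjective b
  exact ⟨![a, 0, b], rfl⟩

theorem mem_ker_coord₀₂Mod {I J : Ideal R} {z : Fin 3 → R} :
    z ∈ LinearMap.ker (coord₀₂Mod I J) ↔ z 0 ∈ I ∧ z 2 ∈ J := by
  simp [coord₀₂Mod, Ideal.Quotient.eq_zero_iff_mem]

end

local notation "I₁" => Ideal.span {1 - sGen + sGen ^ 2, 1 - tGen}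
local notation "I₂" => Ideal.span {1 - sGen, 1 - tGen + tGen ^ 2}

theorem one_sub_tGen_smul_uV_mem_imF4 : (1 - tGen) • uV ∈ imF4 := by
  have h₁ : (1 - tGen) • uV + vV + (1 - sGen) • wV ∈ imF4 := Submodule.subset_span (by simp)
  have h₃ : vV + (1 - sGen) • wV ∈ imF4 := Submodule.subset_span (by simp)
  simpa using sub_mem h₁ h₃

theorem vV_mem_imF4 : vV ∈ imF4 := by
  have h₂ : (1 - tGen) • uV + vV ∈ imF4 := Submodule.subset_span (by simp)
  simpa using sub_mem h₂ one_sub_tGen_smul_uV_mem_imF4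

theorem one_sub_sGen_smul_wV_mem_imF4 : (1 - sGen) • wV ∈ imF4 := by
  have h₃ : vV + (1 - sGen) • wV ∈ imF4 := Submodule.subset_span (by simp)
  simpa using sub_mem h₃ vV_mem_imF4

theorem smul_uV_mem_imF4 {r : GroupRingZ2} (hr : r ∈ I₁) : r • uV ∈ imF4 := by
  obtain ⟨a, b, rfl⟩ := Ideal.mem_span_pair.mp hr
  have h₄ : (1 - sGen + sGen ^ 2) • uV ∈ imF4 := Submodule.subset_span (by simp)
  rw [add_smul, mul_smul, mul_smul]
  exact add_mem (Submodule.smul_mem _ a h₄) (Submodule.smul_mem _ b one_sub_tGen_smul_uV_mem_imF4)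

theorem smul_wV_mem_imF4 {r : GroupRingZ2} (hr : r ∈ I₂) : r • wV ∈ imF4 := by
  obtain ⟨a, b, rfl⟩ := Ideal.mem_span_pair.mp hr
  have h₆ : (1 - tGen + tGen ^ 2) • wV ∈ imF4 := Submodule.subset_span (by simp)
  rw [add_smul, mul_smul, mul_smul]
  exact add_mem (Submodule.smul_mem _ a one_sub_sGen_smul_wV_mem_imF4) (Submodule.smul_mem _ b h₆)

theorem imF4_eq_ker_coord₀₂Mod : imF4 = LinearMap.ker (coord₀₂Mod I₁ I₂) := by
  refine le_antisymm ?_ fun z hz ↦ ?_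
  · have generators_mem : ∀ {a b : GroupRingZ2}, a ∈ Ideal.span {a, b} ∧ b ∈ Ideal.span {a, b} :=
      ⟨Ideal.subset_span (by simp), Ideal.subset_span (by simp)⟩
    rw [imF4, Submodule.span_le]
    simp only [Set.insert_subset_iff, Set.singleton_subset_iff, SetLike.mem_coe,
      mem_ker_coord₀₂Mod]
    simp [uV, vV, wV, generators_mem]
  · obtain ⟨h₀, h₂⟩ := mem_ker_coord₀₂Mod.mp hz
    have hz : z = z 0 • uV + z 1 • vV + z 2 • wV := by
      ext i; fin_cases i <;> simp [uV, vV, wV]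
    rw [hz]
    exact add_mem (add_mem (smul_uV_mem_imF4 h₀) (Submodule.smul_mem _ _ vV_mem_imF4))
      (smul_wV_mem_imF4 h₂)

noncomputable def quotientImF4Equiv :
    ((Fin 3 → GroupRingZ2) ⧸ imF4) ≃ₗ[GroupRingZ2] (GroupRingZ2 ⧸ I₁) × (GroupRingZ2 ⧸ I₂) :=
  (Submodule.quotEquivOfEq _ _ imF4_eq_ker_coord₀₂Mod).trans
    ((coord₀₂Mod I₁ I₂).quotKerEquivOfSurjective (coord₀₂Mod_surjective I₁ I₂))

/-- Let `R = ℤ[s,s⁻¹,t,t⁻¹]` and let `u, v, w` be a basis of the free `R`-module `R³`.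
The quotient of `R³` by the submodule generated by `(1−t)u + v + (1−s)w`, `(1−t)u + v`,
`v + (1−s)w`, `(1−s+s²)u`, `(1+st)v` and `(1−t+t²)w` is isomorphic to
`R/(R(1−s+s²)+R(1−t)) ⊕ R/(R(1−s)+R(1−t+t²))`; in particular its underlying additive
group is free abelian of rank 4.  (Type `F₄`.) -/
theorem quotient_F4 :
    Nonempty
        (((Fin 3 → GroupRingZ2) ⧸ imF4) ≃ₗ[GroupRingZ2]
          ((GroupRingZ2 ⧸ Ideal.span {1 - sGen + sGen ^ 2, 1 - tGen}) ×
            (GroupRingZ2 ⧸ Ideal.span {1 - sGen, 1 - tGen + tGen ^ 2}))) ∧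
      Module.Free ℤ ((Fin 3 → GroupRingZ2) ⧸ imF4) ∧
      Module.rank ℤ ((Fin 3 → GroupRingZ2) ⧸ imF4) = 4 := by
  have hmonic := cyclotomic.monic 6 ℤ
  have hunit := AdjoinRoot.isUnit_root_cyclotomic (R := ℤ) (n := 6) (by norm_num)
  have e₁ : (GroupRingZ2 ⧸ I₁) ≃+* AdjoinRoot (cyclotomic 6 ℤ) :=
    (Ideal.quotEquivOfEq (by rw [aeval_cyclotomic_six])).trans
      (GroupRingZ2.quotientEquivAdjoinRoot _ hunit)
  have e₂ : (GroupRingZ2 ⧸ I₂) ≃+* AdjoinRoot (cyclotomic 6 ℤ) :=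
    (Ideal.quotEquivOfEq (by rw [aeval_cyclotomic_six])).trans
      (GroupRingZ2.quotientEquivAdjoinRootSwap _ hunit)
  let e : ((Fin 3 → GroupRingZ2) ⧸ imF4) ≃ₗ[ℤ]
      AdjoinRoot (cyclotomic 6 ℤ) × AdjoinRoot (cyclotomic 6 ℤ) :=
    (quotientImF4Equiv.restrictScalars ℤ).trans
      (e₁.toAddEquiv.toIntLinearEquiv.prodCongr e₂.toAddEquiv.toIntLinearEquiv)
  have := hmonic.free_adjoinRoot
  refine ⟨⟨quotientImF4Equiv⟩, Module.Free.of_equiv e.symm, ?_⟩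
  rw [e.rank_eq, rank_prod', AdjoinRoot.rank_eq_natDegree hmonic, natDegree_cyclotomic,
    show Nat.totient 6 = 2 by decide]
  norm_num
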